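/- Commutation of marginal and synthesis operators: let A, B, C ⊆ [n] with |A| ≥ 2, |B| ≥ 2 and A ∪ B ⊆ C, and let F ∈ L(Γ(A)). If |A ∩ B| ≥ 2, then M_B(φ_C F) = φ_B(M_{A∩B} F). If |A ∩ B| ≤ 1, then M_B(φ_C F) = ((Σ_{π∈Γ(A)} F(π))/|B|!)·1_{Γ(B)}. -/

import Mathlib

open Finset
open scoped List

abbrev Word (n : ℕ) := List (Fin n)

/-- `Γ(A)`: duplicate-free words whose set of letters is exactly `A`. -/
noncomputable def rankings (n : ℕ) (A : Finset (Fin n)) : Finset (Word n) :=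
  A.toList.permutations.toFinset

/-- All duplicate-free words on `[n]`. -/
noncomputable def allWords (n : ℕ) : Finset (Word n) :=
  Finset.univ.biUnion fun A : Finset (Fin n) => rankings n A

def IsRanking {n : ℕ} (A : Finset (Fin n)) (w : Word n) : Prop :=
  w.Nodup ∧ w.toFinset = A

instance {n : ℕ} (A : Finset (Fin n)) (w : Word n) : Decidable (IsRanking A w) :=
  inferInstanceAs (Decidable (w.Nodup ∧ w.toFinset = A))

/-- Membership in `L(Γ(A))`: functions supported on `Γ(A)`. -/
def MemL {n : ℕ} (A : Finset (Fin n)) (F : Word n → ℝ) : Prop :=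
  ∀ w, F w ≠ 0 → IsRanking A w

/-- Marginal operator `M_B` (with the convention `M_∅ F = (Σ F)·δ_0̄`). -/
noncomputable def marg {n : ℕ} (B : Finset (Fin n)) (F : Word n → ℝ) : Word n → ℝ :=
  fun π => if IsRanking B π then ∑ σ ∈ allWords n, (if π <+ σ then F σ else 0) else 0

/-- Membership in the localization space `H_B` (for `B = ∅` this is `L(Γ(∅)) = ℝ·δ_0̄`). -/
def MemH {n : ℕ} (B : Finset (Fin n)) (F : Word n → ℝ) : Prop :=
  MemL B F ∧
    (∀ B' : Finset (Fin n), B' ⊂ B → 2 ≤ B'.card → marg B' F = 0) ∧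
    (2 ≤ B.card → ∑ π ∈ rankings n B, F π = 0)

/-- `P̄(A) = {B ⊆ A : |B| ≥ 2} ∪ {∅}`. -/
def Pbar {n : ℕ} (A : Finset (Fin n)) : Finset (Finset (Fin n)) :=
  A.powerset.filter fun B => 2 ≤ B.card ∨ B = ∅

/-- Synthesis operator `φ_A`. -/
noncomputable def synth {n : ℕ} (A : Finset (Fin n)) (F : Word n → ℝ) : Word n → ℝ :=
  fun σ =>
    if IsRanking A σ then
      F [] / (Nat.factorial A.card : ℝ) +
        ∑ π ∈ allWords n,
          (if π ≠ [] ∧ π <:+: σ then F π / (Nat.factorial (A.card - π.length + 1) : ℝ) else 0)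
    else 0

/-- Dirac function `δ_π`. -/
noncomputable def dirac {n : ℕ} (π : Word n) : Word n → ℝ :=
  fun w => if w = π then 1 else 0

/-- `σ|_C`: the induced word of `σ` on `C`. -/
def restrictWord {n : ℕ} (σ : Word n) (C : Finset (Fin n)) : Word n :=
  σ.filter fun a => decide (a ∈ C)

/-!
For `σ ∈ Γ(B)` both sides are sums over `w ∈ Γ(A)` of `F w` times a coefficient, so everything
reduces to counting the rankings `τ ∈ Γ(C)` that contain `σ` as a subword and `w` as an infix.
For such `τ` we have `σ = τ|_B`, hence `ρ := w|_B` is an infix of `σ`. Contracting the block `w`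
of `τ` to one letter `h` (taken in `ρ`, or anywhere in `w` when `ρ = []`) is a bijection onto the
rankings of `(C \ A) ∪ {h}` that contain the contraction `σ|_{(C \ A) ∪ {h}}` of `σ` as a subword,
and a ranking of `S` contains a fixed duplicate-free word `u` as a subword in `|S|! / |u|!` cases.
So the count is `(|C|-|A|+1)! / (|B|-|A∩B|+1)!` if `ρ ≠ []` is an infix of `σ`,
`(|C|-|A|+1)! / |B|!` if `ρ = []`, and `0` if `ρ` is not an infix of `σ`.
-/

open scoped Nat

namespace List

variable {α : Type*} [DecidableEq α]

theorem idxOf_insertIdx_of_notMem {x : α} :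
    ∀ {l : List α}, x ∉ l → ∀ {i : ℕ}, i ≤ l.length → (l.insertIdx i x).idxOf x = i
  | _, _, 0, _ => by simp
  | a :: l, hx, i + 1, hi => by
    rw [mem_cons, not_or] at hx
    rw [insertIdx_succ_cons, idxOf_cons_ne _ (Ne.symm hx.1),
      idxOf_insertIdx_of_notMem hx.2 (by simpa using hi)]

theorem erase_insertIdx_of_notMem {x : α} {l : List α} (hx : x ∉ l) {i : ℕ}
    (hi : i ≤ l.length) : (l.insertIdx i x).erase x = l := by
  rw [erase_eq_eraseIdx_of_idxOf (idxOf_insertIdx_of_notMem hx hi), eraseIdx_insertIdx_self]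

theorem insertIdx_idxOf_erase {x : α} {l : List α} (hx : x ∈ l) :
    (l.erase x).insertIdx (l.idxOf x) x = l := by
  have hlt : l.idxOf x < l.length := idxOf_lt_length_iff.2 hx
  conv_rhs => rw [← insertIdx_eraseIdx_getElem hlt]
  rw [erase_eq_eraseIdx_of_idxOf rfl, getElem_idxOf]

end List

section Rankings

variable {n : ℕ} {A : Finset (Fin n)}

theorem mem_rankings {w : Word n} : w ∈ rankings n A ↔ IsRanking A w := by
  simp only [rankings, List.mem_toFinset, List.mem_permutations, IsRanking]
  refine ⟨fun h => ⟨h.symm.nodup A.nodup_toList, by simp [List.toFinset_eq_of_perm _ _ h]⟩,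
    fun ⟨hw, hA⟩ => List.perm_of_nodup_nodup_toFinset_eq hw A.nodup_toList (by simp [hA])⟩

theorem mem_allWords {w : Word n} : w ∈ allWords n ↔ w.Nodup := by
  simp only [allWords, mem_biUnion, mem_univ, true_and, mem_rankings, IsRanking]
  exact ⟨fun ⟨_, hw, _⟩ => hw, fun hw => ⟨_, hw, rfl⟩⟩

theorem IsRanking.length_eq {w : Word n} (h : IsRanking A w) : w.length = A.card := by
  rw [← h.2, List.toFinset_card_of_nodup h.1]

theorem IsRanking.ne_nil {w : Word n} (h : IsRanking A w) (hA : A.Nonempty) : w ≠ [] := by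
  rintro rfl
  simp [← h.2] at hA

theorem isRanking_iff_of_perm {l₁ l₂ : Word n} (h : l₁ ~ l₂) :
    IsRanking A l₁ ↔ IsRanking A l₂ := by
  rw [IsRanking, IsRanking, h.nodup_iff, List.toFinset_eq_of_perm _ _ h]

theorem sum_allWords_eq_sum_rankings {M : Type*} [AddCommMonoid M] (f : Word n → M)
    (hf : ∀ w, ¬IsRanking A w → f w = 0) :
    ∑ w ∈ allWords n, f w = ∑ w ∈ rankings n A, f w :=
  (sum_subset (fun _ hw => mem_allWords.2 (mem_rankings.1 hw).1)
    (fun w _ hw => hf w (mt mem_rankings.2 hw))).symm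

theorem MemL.apply_eq_zero {F : Word n → ℝ} (hF : MemL A F) {w : Word n}
    (hw : ¬IsRanking A w) : F w = 0 :=
  not_not.1 (mt (hF w) hw)

end Rankings

section Restriction

variable {n : ℕ} {A B : Finset (Fin n)}

@[simp]
theorem mem_restrictWord {w : Word n} {a : Fin n} : a ∈ restrictWord w B ↔ a ∈ w ∧ a ∈ B := by
  simp [restrictWord]

theorem restrictWord_append (l₁ l₂ : Word n) (B : Finset (Fin n)) :
    restrictWord (l₁ ++ l₂) B = restrictWord l₁ B ++ restrictWord l₂ B :=
  List.filter_append ..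

theorem restrictWord_eq_self {w : Word n} (h : ∀ a ∈ w, a ∈ B) : restrictWord w B = w :=
  List.filter_eq_self.2 (by simpa using h)

theorem IsRanking.restrict {w : Word n} (h : IsRanking A w) (B : Finset (Fin n)) :
    IsRanking (A ∩ B) (restrictWord w B) :=
  ⟨h.1.filter _, by ext a; simp [← h.2]⟩

theorem IsRanking.restrictWord_eq_of_sublist {σ τ : Word n} (hσ : IsRanking B σ)
    (hτ : τ.Nodup) (h : σ <+ τ) : restrictWord τ B = σ := by
  have hσB : restrictWord σ B = σ := restrictWord_eq_self fun a ha => hσ.2 ▸ List.mem_toFinset.2 ha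
  refine (hσB ▸ h.filter _ : σ <+ restrictWord τ B).eq_of_length_le ?_ |>.symm
  rw [hσ.length_eq, restrictWord, ← List.toFinset_card_of_nodup (hτ.filter _)]
  exact card_le_card fun a ha => by simp_all [restrictWord]

theorem IsRanking.restrictWord_isInfix {σ τ w : Word n} (hσ : IsRanking B σ) (hτ : τ.Nodup)
    (hστ : σ <+ τ) (hwτ : w <:+: τ) : restrictWord w B <:+: σ := by
  obtain ⟨p, q, rfl⟩ := hwτ
  rw [← hσ.restrictWord_eq_of_sublist hτ hστ, restrictWord_append, restrictWord_append]
  exact List.infix_append _ _ _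

theorem IsRanking.sublist_iff_eq_restrictWord {w ρ : Word n} (hw : IsRanking A w) :
    IsRanking (A ∩ B) ρ ∧ ρ <+ w ↔ ρ = restrictWord w B := by
  have hAB : restrictWord w (A ∩ B) = restrictWord w B :=
    List.filter_congr fun a ha => by simp [← hw.2, ha]
  constructor
  · rintro ⟨hρ, hρw⟩
    rw [← hAB, hρ.restrictWord_eq_of_sublist hw.1 hρw]
  · rintro rfl
    exact ⟨hw.restrict B, List.filter_sublist⟩

end Restriction

section SublistCount

variable {n : ℕ}

theorem card_filter_sublist_rankings_insert {S : Finset (Fin n)} {x : Fin n} (hxS : x ∉ S)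
    {u : Word n} (hxu : x ∉ u) :
    #{τ ∈ rankings n (insert x S) | u <+ τ} = (S.card + 1) * #{τ ∈ rankings n S | u <+ τ} := by
  rw [← card_range (S.card + 1), ← card_product]
  refine card_bij' (fun τ _ => (τ.idxOf x, τ.erase x)) (fun p _ => p.2.insertIdx p.1 x)
    ?_ ?_ ?_ ?_
  · intro τ hτ
    simp only [mem_filter, mem_rankings, mem_product, mem_range] at hτ ⊢
    obtain ⟨⟨hτn, hτS⟩, hu⟩ := hτ
    have hxτ : x ∈ τ := by simp [← List.mem_toFinset, hτS]
    refine ⟨?_, ⟨hτn.erase x, ?_⟩, List.erase_of_not_mem hxu ▸ hu.erase x⟩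
    · rw [← card_insert_of_notMem hxS, ← hτS, List.toFinset_card_of_nodup hτn]
      exact List.idxOf_lt_length_iff.2 hxτ
    · have : (τ.erase x).toFinset = τ.toFinset.erase x := by
        ext a; simp [hτn.mem_erase_iff]
      rw [this, hτS, erase_insert hxS]
  · rintro ⟨i, τ'⟩ hp
    simp only [mem_filter, mem_rankings, mem_product, mem_range] at hp ⊢
    obtain ⟨hi, ⟨hτn, hτS⟩, hu⟩ := hp
    have hxτ : x ∉ τ' := by simpa [← List.mem_toFinset, hτS]
    have hle : i ≤ τ'.length := by rw [← List.toFinset_card_of_nodup hτn, hτS]; omega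
    have hperm := List.perm_insertIdx x τ' hle
    refine ⟨⟨hperm.nodup_iff.2 (hτn.cons hxτ), ?_⟩, hu.trans (List.sublist_insertIdx _ _ _)⟩
    rw [List.toFinset_eq_of_perm _ _ hperm, List.toFinset_cons, hτS]
  · intro τ hτ
    simp only [mem_filter, mem_rankings] at hτ
    exact List.insertIdx_idxOf_erase (by simp [← List.mem_toFinset, hτ.1.2])
  · rintro ⟨i, τ'⟩ hp
    simp only [mem_filter, mem_rankings, mem_product, mem_range] at hp
    obtain ⟨hi, ⟨hτn, hτS⟩, hu⟩ := hp
    have hxτ : x ∉ τ' := by simpa [← List.mem_toFinset, hτS]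
    have hle : i ≤ τ'.length := by rw [← List.toFinset_card_of_nodup hτn, hτS]; omega
    simp [List.idxOf_insertIdx_of_notMem hxτ hle, List.erase_insertIdx_of_notMem hxτ hle]

theorem card_filter_sublist_rankings_mul_factorial {u : Word n} (hu : u.Nodup) :
    ∀ {S : Finset (Fin n)}, u.toFinset ⊆ S →
      #{τ ∈ rankings n S | u <+ τ} * u.length ! = S.card ! := by
  intro S
  induction S using Finset.strongInduction with
  | H S ih =>
    intro huS
    obtain hS | ⟨x, hxS, hxu⟩ := (huS.eq_or_ssubset).imp id (exists_of_ssubset)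
    · have : {τ ∈ rankings n S | u <+ τ} = {u} := by
        ext τ
        simp only [mem_filter, mem_rankings, mem_singleton]
        refine ⟨fun ⟨hτ, huτ⟩ => ?_, by rintro rfl; exact ⟨⟨hu, hS⟩, List.Sublist.refl τ⟩⟩
        exact (huτ.eq_of_length (by rw [hτ.length_eq, ← hS, List.toFinset_card_of_nodup hu])).symm
      rw [this, card_singleton, one_mul, ← hS, List.toFinset_card_of_nodup hu]
    · have hS : insert x (S.erase x) = S := insert_erase hxS
      rw [← hS, card_filter_sublist_rankings_insert (notMem_erase x S)
          (by simpa using hxu), mul_assoc,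
        ih _ (erase_ssubset hxS) fun a ha => mem_erase.2 ⟨by rintro rfl; exact hxu ha, huS ha⟩,
        card_insert_of_notMem (notMem_erase x S), Nat.factorial_succ]

end SublistCount

section Blocks

variable {α : Type*} [DecidableEq α]

def expandLetter (h : α) (π l : List α) : List α :=
  l.flatMap fun a => if a = h then π else [a]

theorem expandLetter_of_notMem {h : α} {π l : List α} (hl : h ∉ l) : expandLetter h π l = l := by
  rw [expandLetter, List.flatMap_congr (g := fun a => [a]), List.flatMap_singleton']
  intro a ha
  rw [if_neg (ne_of_mem_of_not_mem ha hl)]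

theorem List.Sublist.expandLetter {l₁ l₂ : List α} (hl : l₁ <+ l₂) (h : α) (π : List α) :
    _root_.expandLetter h π l₁ <+ _root_.expandLetter h π l₂ :=
  hl.flatMap _

theorem expandLetter_block {h : α} {π p q : List α} (hp : h ∉ p) (hq : h ∉ q) :
    expandLetter h π (p ++ [h] ++ q) = p ++ π ++ q := by
  have hp' := expandLetter_of_notMem (π := π) hp
  have hq' := expandLetter_of_notMem (π := π) hq
  simp only [expandLetter] at hp' hq' ⊢
  simp [hp', hq']

end Blocks

section Contraction

variable {n : ℕ} {A C : Finset (Fin n)}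

theorem isRanking_append_iff {π : Word n} (hπ : IsRanking A π) (hAC : A ⊆ C) (r : Word n) :
    IsRanking C (π ++ r) ↔ IsRanking (C \ A) r := by
  have hmem : ∀ a, a ∈ A ↔ a ∈ π := fun a => by rw [← hπ.2, List.mem_toFinset]
  simp only [IsRanking, List.nodup_append, hπ.1, true_and, List.toFinset_append, hπ.2]
  constructor
  · rintro ⟨⟨hr, hdisj⟩, rfl⟩
    refine ⟨hr, ?_⟩
    ext a
    simp only [List.mem_toFinset, mem_sdiff, mem_union, hmem]
    grind
  · rintro ⟨hr, hrC⟩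
    refine ⟨⟨hr, ?_⟩, by rw [hrC, union_sdiff_of_subset hAC]⟩
    rintro a ha b hb rfl
    have : a ∈ C \ A := hrC ▸ List.mem_toFinset.2 hb
    exact (mem_sdiff.1 this).2 ((hmem a).2 ha)

theorem isRanking_block_iff {π : Word n} (hπ : IsRanking A π) (hAC : A ⊆ C) (p q : Word n) :
    IsRanking C (p ++ π ++ q) ↔ IsRanking (C \ A) (p ++ q) := by
  rw [isRanking_iff_of_perm (List.perm_append_comm.append_right q), List.append_assoc,
    isRanking_append_iff hπ hAC]

theorem restrictWord_block {D : Finset (Fin n)} {π : Word n} {h : Fin n} (hπ : π.Nodup)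
    (hh : h ∈ π) (hπD : ∀ a ∈ π, a ∈ D ↔ a = h) {p q : Word n} (hp : ∀ a ∈ p, a ∈ D)
    (hq : ∀ a ∈ q, a ∈ D) : restrictWord (p ++ π ++ q) D = p ++ [h] ++ q := by
  have hπ' : restrictWord π D = [h] := by
    rw [restrictWord, List.filter_congr (q := (· = h)) fun a ha => by simp [hπD a ha],
      List.filter_eq, List.count_eq_one_of_mem hπ hh, List.replicate_one]
  rw [restrictWord_append, restrictWord_append, restrictWord_eq_self hp, restrictWord_eq_self hq,
    hπ']

theorem isRanking_insert_sdiff_iff {h : Fin n} (hhA : h ∈ A) (τ : Word n) :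
    IsRanking (insert h (C \ A)) τ ↔ ∃ p q, τ = p ++ [h] ++ q ∧ IsRanking (C \ A) (p ++ q) := by
  have hblock : ∀ p q : Word n,
      IsRanking (insert h (C \ A)) (p ++ [h] ++ q) ↔ IsRanking (C \ A) (p ++ q) := by
    intro p q
    rw [isRanking_block_iff (A := {h}) ⟨List.nodup_singleton h, by simp⟩
      (singleton_subset_iff.2 (mem_insert_self _ _)), insert_sdiff_of_mem _ (mem_singleton_self h),
      sdiff_singleton_eq_erase, erase_eq_of_notMem (by simp [hhA])]
  constructor
  · intro hτ
    have hhτ : h ∈ τ := by simp [← List.mem_toFinset, hτ.2]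
    obtain ⟨p, q, rfl⟩ := List.append_of_mem hhτ
    exact ⟨p, q, by simp, (hblock p q).1 (by simpa using hτ)⟩
  · rintro ⟨p, q, rfl, hpq⟩
    exact (hblock p q).2 hpq

theorem isRanking_and_isInfix_iff {w : Word n} (hw : IsRanking A w) (hAC : A ⊆ C) (τ : Word n) :
    IsRanking C τ ∧ w <:+: τ ↔ ∃ p q, τ = p ++ w ++ q ∧ IsRanking (C \ A) (p ++ q) := by
  constructor
  · rintro ⟨hτ, p, q, rfl⟩
    exact ⟨p, q, rfl, (isRanking_block_iff hw hAC p q).1 hτ⟩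
  · rintro ⟨p, q, rfl, hpq⟩
    exact ⟨(isRanking_block_iff hw hAC p q).2 hpq, List.infix_append _ _ _⟩

theorem restrictWord_insert_sdiff_block {w p q : Word n} {h : Fin n} (hw : IsRanking A w)
    (hh : h ∈ w) (hpq : IsRanking (C \ A) (p ++ q)) :
    restrictWord (p ++ w ++ q) (insert h (C \ A)) = p ++ [h] ++ q := by
  have hD : ∀ a, a ∈ p ++ q → a ∈ insert h (C \ A) := fun a ha =>
    mem_insert_of_mem (by rwa [← hpq.2, List.mem_toFinset])
  refine restrictWord_block hw.1 hh (fun a ha => ?_) (fun a ha => hD a (by simp [ha]))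
    (fun a ha => hD a (by simp [ha]))
  have : a ∈ A := by simp [← hw.2, ha]
  simp [this]

theorem expandLetter_block_of_isRanking_sdiff {π p q : Word n} {h : Fin n} (hhA : h ∈ A)
    (hpq : IsRanking (C \ A) (p ++ q)) : expandLetter h π (p ++ [h] ++ q) = p ++ π ++ q := by
  have hhpq : h ∉ p ++ q := by simp [← List.mem_toFinset, hpq.2, hhA]
  exact expandLetter_block (fun hm => hhpq (by simp [hm])) (fun hm => hhpq (by simp [hm]))

-- `hσ` makes `σ <+ τ` equivalent to the contraction of `σ` being a subword of that of `τ`.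
theorem card_filter_sublist_isInfix_eq {w σ : Word n} {h : Fin n} (hw : IsRanking A w)
    (hAC : A ⊆ C) (hh : h ∈ w)
    (hσ : σ <+ expandLetter h w (restrictWord σ (insert h (C \ A)))) :
    #{τ ∈ rankings n C | σ <+ τ ∧ w <:+: τ} =
      #{τ ∈ rankings n (insert h (C \ A)) | restrictWord σ (insert h (C \ A)) <+ τ} := by
  have hhA : h ∈ A := by simp [← hw.2, hh]
  refine card_bij' (fun τ _ => restrictWord τ (insert h (C \ A)))
    (fun τ _ => expandLetter h w τ) ?_ ?_ ?_ ?_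
  · intro τ hτ
    simp only [mem_filter, mem_rankings] at hτ ⊢
    obtain ⟨p, q, rfl, hpq⟩ := (isRanking_and_isInfix_iff hw hAC τ).1 ⟨hτ.1, hτ.2.2⟩
    have hcontract := restrictWord_insert_sdiff_block hw hh hpq
    rw [hcontract]
    exact ⟨(isRanking_insert_sdiff_iff hhA _).2 ⟨p, q, rfl, hpq⟩, hcontract ▸ hτ.2.1.filter _⟩
  · intro τ hτ
    simp only [mem_filter, mem_rankings] at hτ ⊢
    obtain ⟨p, q, rfl, hpq⟩ := (isRanking_insert_sdiff_iff hhA _).1 hτ.1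
    have hexpand := expandLetter_block_of_isRanking_sdiff (π := w) hhA hpq
    exact ⟨hexpand ▸ (isRanking_block_iff hw hAC p q).2 hpq,
      hσ.trans (hτ.2.expandLetter h w), hexpand ▸ List.infix_append _ _ _⟩
  · intro τ hτ
    simp only [mem_filter, mem_rankings] at hτ
    obtain ⟨p, q, rfl, hpq⟩ := (isRanking_and_isInfix_iff hw hAC τ).1 ⟨hτ.1, hτ.2.2⟩
    rw [restrictWord_insert_sdiff_block hw hh hpq, expandLetter_block_of_isRanking_sdiff hhA hpq]
  · intro τ hτ
    simp only [mem_filter, mem_rankings] at hτ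
    obtain ⟨p, q, rfl, hpq⟩ := (isRanking_insert_sdiff_iff hhA _).1 hτ.1
    rw [expandLetter_block_of_isRanking_sdiff hhA hpq, restrictWord_insert_sdiff_block hw hh hpq]

end Contraction

section Operators

variable {n : ℕ} {A : Finset (Fin n)} {F : Word n → ℝ}

theorem MemL.marg_apply (hF : MemL A F) (B : Finset (Fin n)) (ρ : Word n) :
    marg B F ρ =
      if IsRanking B ρ then ∑ w ∈ rankings n A, (if ρ <+ w then F w else 0) else 0 := by
  rw [marg, sum_allWords_eq_sum_rankings _ fun w hw => by simp [hF.apply_eq_zero hw]]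

theorem MemL.synth_apply (hF : MemL A F) (hA : A.Nonempty) (C : Finset (Fin n)) (τ : Word n) :
    synth C F τ = ∑ w ∈ rankings n A,
      if IsRanking C τ ∧ w <:+: τ then F w / (C.card - A.card + 1)! else 0 := by
  by_cases hτ : IsRanking C τ
  · have hnil : ¬IsRanking A [] := fun h => h.ne_nil hA rfl
    rw [synth, if_pos hτ, hF.apply_eq_zero hnil, zero_div, zero_add,
      sum_allWords_eq_sum_rankings _ fun w hw => by simp [hF.apply_eq_zero hw]]
    refine sum_congr rfl fun w hw => ?_
    have hw := mem_rankings.1 hw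
    simp [hτ, hw.ne_nil hA, hw.length_eq]
  · simp [synth, hτ]

theorem MemL.marg_synth_apply (hF : MemL A F) (hA : A.Nonempty) (B C : Finset (Fin n))
    (σ : Word n) :
    marg B (synth C F) σ = if IsRanking B σ then ∑ w ∈ rankings n A,
      (#{τ ∈ rankings n C | σ <+ τ ∧ w <:+: τ} : ℝ) * F w / (C.card - A.card + 1)! else 0 := by
  rw [marg]
  refine if_congr Iff.rfl ?_ rfl
  rw [← sum_filter]
  simp_rw [hF.synth_apply hA]
  rw [sum_comm]
  refine sum_congr rfl fun w _ => ?_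
  rw [← sum_filter, sum_const, nsmul_eq_mul, mul_div_assoc, filter_filter]
  congr 3
  ext τ
  simp only [mem_filter, mem_allWords, mem_rankings]
  exact ⟨fun ⟨_, hστ, hτ, hwτ⟩ => ⟨hτ, hστ, hwτ⟩, fun ⟨hτ, hστ, hwτ⟩ => ⟨hτ.1, hστ, hτ, hwτ⟩⟩

theorem memL_marg (B : Finset (Fin n)) (F : Word n → ℝ) : MemL B (marg B F) := fun ρ hρ => by
  by_contra h
  exact hρ (if_neg h)

theorem MemL.synth_marg_apply (hF : MemL A F) {B : Finset (Fin n)} (hAB : (A ∩ B).Nonempty)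
    (σ : Word n) :
    synth B (marg (A ∩ B) F) σ = if IsRanking B σ then ∑ w ∈ rankings n A,
      (if restrictWord w B <:+: σ then F w / (B.card - (A ∩ B).card + 1)! else 0) else 0 := by
  rw [(memL_marg (A ∩ B) F).synth_apply hAB]
  split_ifs with hσ
  · simp only [hσ, true_and, hF.marg_apply, ite_div, zero_div, sum_div]
    set c : Word n → ℝ := fun w => F w / (B.card - (A ∩ B).card + 1)!
    calc _ = ∑ ρ ∈ rankings n (A ∩ B), ∑ w ∈ rankings n A,
            if ρ = restrictWord w B then (if ρ <:+: σ then c w else 0) else 0 := by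
          refine sum_congr rfl fun ρ hρ => ?_
          rw [if_pos (mem_rankings.1 hρ)]
          split_ifs with hρσ
          · refine sum_congr rfl fun w hw => if_congr ?_ rfl rfl
            rw [← (mem_rankings.1 hw).sublist_iff_eq_restrictWord,
              and_iff_right (mem_rankings.1 hρ)]
          · simp
      _ = _ := by
          rw [sum_comm]
          refine sum_congr rfl fun w hw => ?_
          rw [sum_ite_eq', if_pos (mem_rankings.2 ((mem_rankings.1 hw).restrict B))]
  · simp [hσ]

end Operators

section Extensions

variable {n : ℕ} {A B C : Finset (Fin n)} {σ w : Word n}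

theorem card_filter_sublist_isInfix_mul_factorial {h : Fin n} (hσn : σ.Nodup)
    (hw : IsRanking A w) (hAC : A ⊆ C) (hh : h ∈ w)
    (hσ : σ <+ expandLetter h w (restrictWord σ (insert h (C \ A)))) :
    #{τ ∈ rankings n C | σ <+ τ ∧ w <:+: τ} * (restrictWord σ (insert h (C \ A))).length ! =
      (C.card - A.card + 1)! := by
  have hhA : h ∈ A := by simp [← hw.2, hh]
  rw [card_filter_sublist_isInfix_eq hw hAC hh hσ,
    card_filter_sublist_rankings_mul_factorial (u := restrictWord σ _) (hσn.filter _)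
      (fun a ha => by simp_all),
    card_insert_of_notMem (by simp [hhA]), card_sdiff_of_subset hAC]

theorem card_filter_sublist_isInfix_mul_factorial_of_isInfix (hσ : IsRanking B σ)
    (hw : IsRanking A w) (hAC : A ⊆ C) (hBC : B ⊆ C) (hwσ : restrictWord w B <:+: σ)
    (hne : restrictWord w B ≠ []) :
    #{τ ∈ rankings n C | σ <+ τ ∧ w <:+: τ} * (B.card - (A ∩ B).card + 1)! =
      (C.card - A.card + 1)! := by
  have hρ := hw.restrict B
  set ρ := restrictWord w B
  set h := ρ.head hne
  have hhρ : h ∈ ρ := List.head_mem hne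
  have hρA : ∀ a ∈ ρ, a ∈ A := fun a ha => by
    rw [← hw.2, List.mem_toFinset]; exact List.mem_of_mem_filter ha
  obtain ⟨s, t, rfl⟩ := hwσ
  have hst := (isRanking_block_iff hρ inter_subset_right s t).1 hσ
  have hstA : ∀ a ∈ s ++ t, a ∈ B ∧ a ∉ A := fun a ha => by
    have : a ∈ B \ (A ∩ B) := by rw [← hst.2, List.mem_toFinset]; exact ha
    simp only [mem_sdiff, mem_inter] at this
    tauto
  have hσD : restrictWord (s ++ ρ ++ t) (insert h (C \ A)) = s ++ [h] ++ t := by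
    refine restrictWord_block hρ.1 hhρ (fun a ha => by simp [hρA a ha]) (fun a ha => ?_)
      (fun a ha => ?_) <;>
    · obtain ⟨haB, haA⟩ := hstA a (by simp [ha])
      simp [hBC haB, haA]
  have hexpand : expandLetter h w (s ++ [h] ++ t) = s ++ w ++ t :=
    expandLetter_block (fun hm => (hstA h (by simp [hm])).2 (hρA h hhρ))
      (fun hm => (hstA h (by simp [hm])).2 (hρA h hhρ))
  have := card_filter_sublist_isInfix_mul_factorial hσ.1 hw hAC (List.mem_of_mem_filter hhρ)
    (by rw [hσD, hexpand]; exact (List.filter_sublist.append_left s).append_right t)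
  rwa [hσD, show (s ++ [h] ++ t).length = B.card - (A ∩ B).card + 1 by
    rw [← card_sdiff_of_subset inter_subset_right, ← hst.length_eq]; simp; omega] at this

theorem card_filter_sublist_isInfix_mul_factorial_of_disjoint (hσ : IsRanking B σ)
    (hw : IsRanking A w) (hA : A.Nonempty) (hAC : A ⊆ C) (hBC : B ⊆ C) (hAB : Disjoint A B) :
    #{τ ∈ rankings n C | σ <+ τ ∧ w <:+: τ} * B.card ! = (C.card - A.card + 1)! := by
  obtain ⟨h, hhA⟩ := hA
  have hσD : restrictWord σ (insert h (C \ A)) = σ := restrictWord_eq_self fun a ha => by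
    have haB : a ∈ B := by simp [← hσ.2, ha]
    simp [hBC haB, disjoint_right.1 hAB haB]
  have hhσ : h ∉ σ := fun hm => disjoint_left.1 hAB hhA (by simp [← hσ.2, hm])
  have := card_filter_sublist_isInfix_mul_factorial hσ.1 hw hAC (by rwa [← List.mem_toFinset, hw.2])
    (by rw [hσD, expandLetter_of_notMem hhσ])
  rwa [hσD, hσ.length_eq] at this

theorem card_filter_sublist_isInfix_mul_factorial_of_card_inter_le_one (hσ : IsRanking B σ)
    (hw : IsRanking A w) (hA : A.Nonempty) (hAC : A ⊆ C) (hBC : B ⊆ C)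
    (hAB : (A ∩ B).card ≤ 1) :
    #{τ ∈ rankings n C | σ <+ τ ∧ w <:+: τ} * B.card ! = (C.card - A.card + 1)! := by
  obtain hAB | hAB := Nat.le_one_iff_eq_zero_or_eq_one.1 hAB
  · exact card_filter_sublist_isInfix_mul_factorial_of_disjoint hσ hw hA hAC hBC
      (disjoint_iff_inter_eq_empty.2 (card_eq_zero.1 hAB))
  · have hρ := hw.restrict B
    obtain ⟨a, ha⟩ := List.length_eq_one_iff.1 (hAB ▸ hρ.length_eq)
    have haB : a ∈ B := (mem_restrictWord.1 (ha ▸ List.mem_singleton_self a)).2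
    have := card_filter_sublist_isInfix_mul_factorial_of_isInfix hσ hw hAC hBC
      (ha ▸ (List.singleton_infix_iff _ _).2 (by simpa [← hσ.2] using haB)) (by simp [ha])
    rwa [hAB, Nat.sub_add_cancel (card_pos.2 ⟨a, haB⟩)] at this

theorem card_filter_sublist_isInfix_eq_zero (hσ : IsRanking B σ)
    (hwσ : ¬restrictWord w B <:+: σ) : #{τ ∈ rankings n C | σ <+ τ ∧ w <:+: τ} = 0 :=
  card_eq_zero.2 <| filter_eq_empty_iff.2 fun _ hτ hτσw =>
    hwσ (hσ.restrictWord_isInfix (mem_rankings.1 hτ).1 hτσw.1 hτσw.2)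

end Extensions

theorem natCast_mul_div_eq_div_of_mul_eq {N b c : ℕ} (h : N * b = c) (hc : c ≠ 0) (x : ℝ) :
    N * x / c = x / b := by
  rw [← h, Nat.cast_mul, mul_div_mul_left _ _ (by exact_mod_cast left_ne_zero_of_mul (h ▸ hc))]

theorem marg_synth_commute_general {n : ℕ}
    (A B C : Finset (Fin n)) (hA : 2 ≤ A.card) (hC : A ∪ B ⊆ C)
    (F : Word n → ℝ) (hF : MemL A F) :
    (2 ≤ (A ∩ B).card → marg B (synth C F) = synth B (marg (A ∩ B) F)) ∧
    ((A ∩ B).card ≤ 1 →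
      marg B (synth C F) = fun σ =>
        if IsRanking B σ then (∑ π ∈ rankings n A, F π) / (Nat.factorial B.card : ℝ) else 0) := by
  have hA' : A.Nonempty := card_pos.1 (by omega)
  have hAC : A ⊆ C := subset_union_left.trans hC
  have hBC : B ⊆ C := subset_union_right.trans hC
  refine ⟨fun hAB => funext fun σ => ?_, fun hAB => funext fun σ => ?_⟩
  · rw [hF.marg_synth_apply hA', hF.synth_marg_apply (card_pos.1 (by omega))]
    refine if_ctx_congr Iff.rfl (fun hσ => sum_congr rfl fun w hw => ?_) fun _ => rfl
    have hw := mem_rankings.1 hw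
    split_ifs with hwσ
    · exact natCast_mul_div_eq_div_of_mul_eq (card_filter_sublist_isInfix_mul_factorial_of_isInfix
        hσ hw hAC hBC hwσ ((hw.restrict B).ne_nil (card_pos.1 (by omega))))
        (Nat.factorial_ne_zero _) _
    · simp [card_filter_sublist_isInfix_eq_zero (C := C) hσ hwσ]
  · rw [hF.marg_synth_apply hA']
    refine if_ctx_congr Iff.rfl (fun hσ => ?_) fun _ => rfl
    rw [sum_div]
    exact sum_congr rfl fun w hw => natCast_mul_div_eq_div_of_mul_eq
      (card_filter_sublist_isInfix_mul_factorial_of_card_inter_le_one hσ (mem_rankings.1 hw) hA'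
        hAC hBC hAB) (Nat.factorial_ne_zero _) _

/-- **Commutation of marginal and synthesis operators.**
Let `A, B, C ⊆ [n]` with `|A| ≥ 2`, `|B| ≥ 2`, `A ∪ B ⊆ C`, and `F ∈ L(Γ(A))`.
If `|A ∩ B| ≥ 2` then `M_B (φ_C F) = φ_B (M_{A∩B} F)`;
if `|A ∩ B| ≤ 1` then `M_B (φ_C F)` is the constant `(Σ_{π∈Γ(A)} F π)/|B|!` on `Γ(B)`. -/
theorem marg_synth_commute {n : ℕ} (hn : 2 ≤ n)
    (A B C : Finset (Fin n)) (hA : 2 ≤ A.card) (hB : 2 ≤ B.card) (hC : A ∪ B ⊆ C)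
    (F : Word n → ℝ) (hF : MemL A F) :
    (2 ≤ (A ∩ B).card → marg B (synth C F) = synth B (marg (A ∩ B) F)) ∧
    ((A ∩ B).card ≤ 1 →
      marg B (synth C F) = fun σ =>
        if IsRanking B σ then (∑ π ∈ rankings n A, F π) / (Nat.factorial B.card : ℝ) else 0) :=
  marg_synth_commute_general A B C hA hC F hF
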